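/- Under the (A,B) signGD dynamics, suppose that at some time t one has a/3 < |A(t)| < 2a/3 and |B(t)| < min(|A(t)|, a − |A(t)|) (the stationary subpartition R₂₂). Then for every i ∈ ℕ: A(t + 2i) = A(t), A(t + 2i + 1) = A(t) − sgn(A(t))·a, and B(t') = B(t) for all t' ≥ t; in particular A(t') alternates sign with period 2 and |A(t')| ≤ 2a/3 for all t' ≥ t, while B remains constant. -/

import Mathlib

/-!
As long as `|B| < |A|`, the three signs `sgn(A+B)`, `sgn(A)`, `sgn(A-B)` agree, so one step freezes
`B` and sends `A` to `A - sgn(A)·a`. For `0 < |A| < a` this is the point of opposite sign with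
absolute value `a - |A|`, which still dominates `|B|` by the `R₂₂` condition, and the next step
brings `A` back. Hence `(A, B)` is 2-periodic from time `t`, and `a/3 < |A| < 2a/3` is preserved
by `|A| ↦ a - |A|`.
-/

/-- The frequency-domain `(A,B)` signGD error dynamics with `a = σ₀²η`, `b = σ₁²η`:
`A(t+1) = A(t) − (a/3)(sgn(A+B) + sgn(A) + sgn(A−B))` and
`B(t+1) = B(t) − (b/2)(sgn(A+B) − sgn(A−B))`. -/
def SignGDDyn (σ0sq σ1sq η : ℝ) (A B : ℕ → ℝ) : Prop :=
  (∀ t, A (t+1) = A t - σ0sq * η / 3 *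
      (Real.sign (A t + B t) + Real.sign (A t) + Real.sign (A t - B t))) ∧
  (∀ t, B (t+1) = B t - σ1sq * η / 2 *
      (Real.sign (A t + B t) - Real.sign (A t - B t)))

theorem Real.abs_sub_sign_mul {a x : ℝ} (hx : x ≠ 0) (hxa : |x| ≤ a) :
    |x - Real.sign x * a| = a - |x| := by
  rcases hx.lt_or_gt with hx | hx
  · rw [abs_of_neg hx] at hxa ⊢
    rw [Real.sign_of_neg hx, abs_of_nonneg (by linarith)]
    ring
  · rw [abs_of_pos hx] at hxa ⊢
    rw [Real.sign_of_pos hx, abs_of_nonpos (by linarith)]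
    ring

theorem Real.sign_sub_sign_mul {a x : ℝ} (hx : x ≠ 0) (hxa : |x| < a) :
    Real.sign (x - Real.sign x * a) = -Real.sign x := by
  rcases hx.lt_or_gt with hx | hx
  · rw [abs_of_neg hx] at hxa
    rw [Real.sign_of_neg hx, Real.sign_of_pos (by linarith)]
    norm_num
  · rw [abs_of_pos hx] at hxa
    rw [Real.sign_of_pos hx, Real.sign_of_neg (by linarith)]

theorem Real.sign_add_of_abs_lt {x y : ℝ} (h : |y| < |x|) : Real.sign (x + y) = Real.sign x := by
  rcases lt_trichotomy x 0 with hx | rfl | hx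
  · rw [abs_of_neg hx] at h
    obtain ⟨-, hy⟩ := abs_lt.mp h
    rw [Real.sign_of_neg hx, Real.sign_of_neg (by linarith)]
  · exact absurd h (by simp)
  · rw [abs_of_pos hx] at h
    obtain ⟨hy, -⟩ := abs_lt.mp h
    rw [Real.sign_of_pos hx, Real.sign_of_pos (by linarith)]

theorem Real.sign_sub_of_abs_lt {x y : ℝ} (h : |y| < |x|) : Real.sign (x - y) = Real.sign x := by
  rw [sub_eq_add_neg]
  exact Real.sign_add_of_abs_lt (by rwa [abs_neg])

namespace SignGDDyn

variable {σ0sq σ1sq η : ℝ} {A B : ℕ → ℝ}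

theorem step_of_abs_lt (hdyn : SignGDDyn σ0sq σ1sq η A B) {u : ℕ} (h : |B u| < |A u|) :
    A (u + 1) = A u - Real.sign (A u) * (σ0sq * η) ∧ B (u + 1) = B u := by
  constructor
  · rw [hdyn.1 u, Real.sign_add_of_abs_lt h, Real.sign_sub_of_abs_lt h]
    ring
  · rw [hdyn.2 u, Real.sign_add_of_abs_lt h, Real.sign_sub_of_abs_lt h]
    ring

theorem add_two_eq (hdyn : SignGDDyn σ0sq σ1sq η A B) {u : ℕ}
    (hB : |B u| < min |A u| (σ0sq * η - |A u|)) :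
    A (u + 2) = A u ∧ B (u + 2) = B u := by
  obtain ⟨hBA, hBa⟩ := lt_min_iff.mp hB
  have hA0 : A u ≠ 0 := abs_pos.mp ((abs_nonneg _).trans_lt hBA)
  have hAa : |A u| < σ0sq * η := by linarith [abs_nonneg (B u)]
  obtain ⟨hA₁, hB₁⟩ := hdyn.step_of_abs_lt hBA
  obtain ⟨hA₂, hB₂⟩ := hdyn.step_of_abs_lt (u := u + 1)
    (by rwa [hA₁, hB₁, Real.abs_sub_sign_mul hA0 hAa.le])
  refine ⟨?_, hB₂.trans hB₁⟩
  rw [hA₂, hA₁, Real.sign_sub_sign_mul hA0 hAa]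
  ring

theorem add_two_mul_eq (hdyn : SignGDDyn σ0sq σ1sq η A B) {t : ℕ}
    (hB : |B t| < min |A t| (σ0sq * η - |A t|)) (i : ℕ) :
    A (t + 2 * i) = A t ∧ B (t + 2 * i) = B t := by
  induction i with
  | zero => simp
  | succ i ih =>
    rw [Nat.mul_succ, ← add_assoc, ← ih.1, ← ih.2]
    exact hdyn.add_two_eq (by rwa [ih.1, ih.2])

end SignGDDyn

theorem signGD_stationary_R22_general (σ0sq σ1sq η : ℝ)
    (A B : ℕ → ℝ) (hdyn : SignGDDyn σ0sq σ1sq η A B) (t : ℕ)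
    (hA_lo : σ0sq * η / 3 < |A t|) (hA_hi : |A t| < 2 * (σ0sq * η) / 3)
    (hB : |B t| < min (|A t|) (σ0sq * η - |A t|)) :
    (∀ i : ℕ, A (t + 2*i) = A t ∧
      A (t + 2*i + 1) = A t - Real.sign (A t) * (σ0sq * η)) ∧
    (∀ t' ≥ t, B t' = B t) ∧
    (∀ i : ℕ, Real.sign (A (t + 2*i + 1)) = - Real.sign (A (t + 2*i))) ∧
    (∀ t' ≥ t, |A t'| ≤ 2 * (σ0sq * η) / 3) := by
  obtain ⟨hBA, hBa⟩ := lt_min_iff.mp hB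
  have hA0 : A t ≠ 0 := abs_pos.mp ((abs_nonneg _).trans_lt hBA)
  have hAa : |A t| < σ0sq * η := by linarith [abs_nonneg (B t)]
  have heven := hdyn.add_two_mul_eq hB
  have hodd (i : ℕ) :
      A (t + 2 * i + 1) = A t - Real.sign (A t) * (σ0sq * η) ∧ B (t + 2 * i + 1) = B t := by
    obtain ⟨hA, hB'⟩ := heven i
    rw [← hA, ← hB']
    exact hdyn.step_of_abs_lt (by rwa [hA, hB'])
  refine ⟨fun i ↦ ⟨(heven i).1, (hodd i).1⟩, ?_, ?_, ?_⟩
  · intro t' ht'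
    obtain ⟨n, rfl⟩ := Nat.exists_eq_add_of_le ht'
    obtain ⟨i, rfl | rfl⟩ := Nat.even_or_odd' n
    exacts [(heven i).2, (hodd i).2]
  · intro i
    rw [(heven i).1, (hodd i).1, Real.sign_sub_sign_mul hA0 hAa]
  · intro t' ht'
    obtain ⟨n, rfl⟩ := Nat.exists_eq_add_of_le ht'
    obtain ⟨i, rfl | rfl⟩ := Nat.even_or_odd' n
    · rw [(heven i).1]
      exact hA_hi.le
    · rw [← add_assoc, (hodd i).1, Real.abs_sub_sign_mul hA0 hAa.le]
      linarith

/-- In the stationary subpartition `R₂₂`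
(`a/3 < |A(t)| < 2a/3` and `|B(t)| < min(|A(t)|, a − |A(t)|)`): `A` is
2-periodic, alternating between `A(t)` and `A(t) − sgn(A(t))·a` with alternating
signs and `|A(t')| ≤ 2a/3`, while `B` stays constant, for all later times. -/
theorem signGD_stationary_R22 (σ0sq σ1sq η : ℝ)
    (h0 : 0 < σ0sq) (h1 : 0 < σ1sq) (hη : 0 < η)
    (A B : ℕ → ℝ) (hdyn : SignGDDyn σ0sq σ1sq η A B) (t : ℕ)
    (hA_lo : σ0sq * η / 3 < |A t|) (hA_hi : |A t| < 2 * (σ0sq * η) / 3)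
    (hB : |B t| < min (|A t|) (σ0sq * η - |A t|)) :
    (∀ i : ℕ, A (t + 2*i) = A t ∧
      A (t + 2*i + 1) = A t - Real.sign (A t) * (σ0sq * η)) ∧
    (∀ t' ≥ t, B t' = B t) ∧
    (∀ i : ℕ, Real.sign (A (t + 2*i + 1)) = - Real.sign (A (t + 2*i))) ∧
    (∀ t' ≥ t, |A t'| ≤ 2 * (σ0sq * η) / 3) :=
  signGD_stationary_R22_general σ0sq σ1sq η A B hdyn t hA_lo hA_hi hB
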